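/- arXiv:math-ph/0201055 — 6 statements merged into one kernel-verified Lean document; each statement's English description precedes it below -/
import Mathlib

section
/- Let π be a bounded self-adjoint operator on a Hilbert space with ‖π² − π‖ < 1/4. Then the spectrum of π is contained in the union of the two intervals [−c, c] and [1−c, 1+c], where c = (1 − √(1 − 4‖π² − π‖))/2; in particular, the spectrum of π does not intersect the circle |ζ − 1| = 1/2, i.e. every λ ∈ σ(π) satisfies |λ − 1| ≠ 1/2. -/
open ContinuousLinearMap

open Polynomial in
/-- Let `π` be a bounded self-adjoint operator on a Hilbert space with
`‖π² - π‖ < 1/4`.  Then the spectrum of `π` is contained in the union of the two intervals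
`[-c, c]` and `[1-c, 1+c]`, where `c = (1 - √(1 - 4‖π² - π‖))/2`; in particular, the spectrum
of `π` does not intersect the circle `|ζ - 1| = 1/2`, i.e. every `z ∈ σ(π)` satisfies
`|z - 1| ≠ 1/2`. -/
theorem space_adiabatic_stmt3
    {H : Type*} [NormedAddCommGroup H] [InnerProductSpace ℂ H] [CompleteSpace H]
    (π : H →L[ℂ] H) (hsa : IsSelfAdjoint π) (h : ‖π ∘L π - π‖ < 1 / 4) :
    ∀ z ∈ spectrum ℂ π,
      (‖z‖ ≤ (1 - Real.sqrt (1 - 4 * ‖π ∘L π - π‖)) / 2 ∨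
        ‖z - 1‖ ≤ (1 - Real.sqrt (1 - 4 * ‖π ∘L π - π‖)) / 2) ∧
      ‖z - 1‖ ≠ 1 / 2 := by
  intro z hz
  rcases subsingleton_or_nontrivial H with hS | hN
  · rw [spectrum.of_subsingleton] at hz; exact hz.elim
  set ε := ‖π ∘L π - π‖ with hεdef
  have hε0 : 0 ≤ ε := norm_nonneg _
  -- z is real
  have hzre : z = (z.re : ℂ) := hsa.mem_spectrum_eq_re hz
  set t : ℝ := z.re with ht
  -- spectral mapping for p = X^2 - X
  have hmap : z ^ 2 - z ∈ spectrum ℂ (π ∘L π - π) := by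
    have := spectrum.subset_polynomial_aeval π (X ^ 2 - X : ℂ[X]) ⟨z, hz, rfl⟩
    simpa [Polynomial.eval_sub, Polynomial.eval_pow, Polynomial.eval_X, map_sub, map_pow,
      Polynomial.aeval_X, sq, mul_def] using this
  have hb : ‖z ^ 2 - z‖ ≤ ε := spectrum.norm_le_norm_of_mem hmap
  have hbt : |t ^ 2 - t| ≤ ε := by
    have : z ^ 2 - z = ((t ^ 2 - t : ℝ) : ℂ) := by rw [hzre]; push_cast; ring
    rw [this, Complex.norm_real, Real.norm_eq_abs] at hb
    exact hb
  have hnz : ‖z‖ = |t| := by rw [hzre, Complex.norm_real, Real.norm_eq_abs]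
  have hnz1 : ‖z - 1‖ = |t - 1| := by
    rw [hzre]
    rw [show ((t : ℂ) - 1) = ((t - 1 : ℝ) : ℂ) by push_cast; ring, Complex.norm_real, Real.norm_eq_abs]
  set s := Real.sqrt (1 - 4 * ε) with hs
  have hs0 : 0 ≤ s := Real.sqrt_nonneg _
  have hs2 : s ^ 2 = 1 - 4 * ε := Real.sq_sqrt (by linarith)
  rw [hnz, hnz1]
  constructor
  · rcases le_or_gt t (1 / 2) with hc | hc
    · left
      rw [abs_le]
      have h1 := abs_le.mp hbt
      constructor
      · nlinarith [h1.1, h1.2, sq_nonneg (2 * t - 1 + s), sq_nonneg (2 * t - 1 - s)]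
      · nlinarith [h1.1, h1.2, sq_nonneg (2 * t - 1 + s), sq_nonneg (2 * t - 1 - s)]
    · right
      rw [abs_le]
      have h1 := abs_le.mp hbt
      constructor
      · nlinarith [h1.1, h1.2, sq_nonneg (2 * t - 1 + s), sq_nonneg (2 * t - 1 - s)]
      · nlinarith [h1.1, h1.2, sq_nonneg (2 * t - 1 + s), sq_nonneg (2 * t - 1 - s)]
  · intro habs
    have h1 := abs_le.mp hbt
    have h2 : (t - 1) ^ 2 = 1 / 4 := by
      have := sq_abs (t - 1)
      rw [habs] at this; nlinarith [this]
    nlinarith [h1.1, h1.2]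
end

section
/- Let Ĥ be self-adjoint on a Hilbert space H, ĥ self-adjoint on a Hilbert space K, and û : H → K a bounded operator with û D(Ĥ) ⊆ D(ĥ) such that the operator Ĥ û* − û* ĥ is bounded with norm ≤ δ. Then for all t ∈ ℝ, ‖e^{−iĤt} û* − û* e^{−iĥt}‖ ≤ δ |t|. -/
/-!
For `y ∈ D(Ĥ)` and `x ∈ D(ĥ)`, the matrix element `s ↦ ⟪e^{-iĤs} y, û* e^{-iĥs} x⟫` has
derivative `i ⟪e^{-iĤs} y, C e^{-iĥs} x⟫` (move `Ĥ` across the inner product by symmetry, and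
commute both generators with their groups), of modulus at most `‖C‖ ‖y‖ ‖x‖`. The mean value
theorem and unitarity of `e^{-iĤt}` bound the matrix elements of `e^{-iĤt} û* − û* e^{-iĥt}`
between the dense domains by `‖C‖ |t| ‖y‖ ‖x‖`, and this bounds its operator norm.
-/

open ContinuousLinearMap
open scoped InnerProductSpace

namespace ContinuousLinearMap

variable {𝕜 E F : Type*} [RCLike 𝕜] [NormedAddCommGroup E] [InnerProductSpace 𝕜 E]
  [NormedAddCommGroup F] [InnerProductSpace 𝕜 F]

theorem opNorm_le_of_norm_inner_le_of_dense (T : E →L[𝕜] F) {s : Set F} {r : Set E}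
    (hs : Dense s) (hr : Dense r) {M : ℝ} (hM : 0 ≤ M)
    (h : ∀ y ∈ s, ∀ x ∈ r, ‖⟪y, T x⟫_𝕜‖ ≤ M * (‖y‖ * ‖x‖)) : ‖T‖ ≤ M := by
  have hclosed (y : F) : IsClosed {x | ‖⟪y, T x⟫_𝕜‖ ≤ M * (‖y‖ * ‖x‖)} :=
    isClosed_le (by fun_prop) (by fun_prop)
  have hall (y : F) (x : E) : ‖⟪y, T x⟫_𝕜‖ ≤ M * (‖y‖ * ‖x‖) := by
    refine hs.induction (P := fun y => ∀ x, ‖⟪y, T x⟫_𝕜‖ ≤ M * (‖y‖ * ‖x‖))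
      (fun y hy => hr.induction (h y hy) (hclosed y)) ?_ y x
    simp only [Set.ofPred_forall]
    exact isClosed_iInter fun x => isClosed_le (by fun_prop) (by fun_prop)
  refine opNorm_le_of_re_inner_le hM fun x y hx hy => ?_
  calc RCLike.re ⟪T x, y⟫_𝕜 ≤ ‖⟪T x, y⟫_𝕜‖ := RCLike.re_le_norm _
    _ = ‖⟪y, T x⟫_𝕜‖ := norm_inner_symm _ _
    _ ≤ M * (‖y‖ * ‖x‖) := hall y x
    _ = M := by rw [hx, hy, mul_one, mul_one]

end ContinuousLinearMap

/-- Models `U t = e^{-i t A}` for a generator `A` with domain `D`. -/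
structure IsUnitaryGroupGeneratedBy {E : Type*} [NormedAddCommGroup E] [NormedSpace ℂ E]
    {D : Submodule ℂ E} (A : D →ₗ[ℂ] E) (U : ℝ → E →L[ℂ] E) : Prop where
  map_zero : U 0 = 1
  map_add : ∀ s t, U (s + t) = U s ∘L U t
  norm_map : ∀ t x, ‖U t x‖ = ‖x‖
  mapsTo : ∀ t, ∀ x ∈ D, U t x ∈ D
  hasDerivAt : ∀ (x : D) t, HasDerivAt (fun s => U s (x : E)) (U t (-(Complex.I • A x))) t

namespace IsUnitaryGroupGeneratedBy

section NormedSpace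

variable {E : Type*} [NormedAddCommGroup E] [NormedSpace ℂ E] {D : Submodule ℂ E}
  {A : D →ₗ[ℂ] E} {U : ℝ → E →L[ℂ] E}

theorem apply_apply_neg (hU : IsUnitaryGroupGeneratedBy A U) (t : ℝ) (x : E) :
    U t (U (-t) x) = x := by
  rw [← ContinuousLinearMap.comp_apply, ← hU.map_add, add_neg_cancel, hU.map_zero,
    one_apply_eq_self]

/-- Up to the factor `-i`, both sides are the derivative of `s ↦ U s v = U (s - t) (U t v)`
at `s = t`. -/
theorem generator_comm (hU : IsUnitaryGroupGeneratedBy A U) (v : D) (t : ℝ) :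
    A ⟨U t v, hU.mapsTo t v v.2⟩ = U t (A v) := by
  set w : D := ⟨U t v, hU.mapsTo t v v.2⟩
  have hshift : HasDerivAt (fun s => U (s - t) (w : E)) (U (t - t) (-(Complex.I • A w))) t :=
    (hU.hasDerivAt w (t - t)).comp_sub_const t t
  have hfun : (fun s => U (s - t) (w : E)) = fun s => U s (v : E) := by
    funext s
    rw [← ContinuousLinearMap.comp_apply, ← hU.map_add, sub_add_cancel]
  rw [hfun] at hshift
  have huniq := (hU.hasDerivAt v t).unique hshift
  rw [sub_self, hU.map_zero, one_apply_eq_self, map_neg, map_smul, neg_inj] at huniq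
  exact (smul_right_injective E Complex.I_ne_zero huniq).symm

theorem hasDerivAt_generator (hU : IsUnitaryGroupGeneratedBy A U) (v : D) (t : ℝ) :
    HasDerivAt (fun s => U s (v : E)) (-(Complex.I • A ⟨U t v, hU.mapsTo t v v.2⟩)) t := by
  simpa only [hU.generator_comm, map_neg, map_smul] using hU.hasDerivAt v t

end NormedSpace

theorem inner_map_map {E : Type*} [NormedAddCommGroup E] [InnerProductSpace ℂ E]
    {D : Submodule ℂ E} {A : D →ₗ[ℂ] E} {U : ℝ → E →L[ℂ] E}
    (hU : IsUnitaryGroupGeneratedBy A U) (t : ℝ) (x y : E) :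
    ⟪U t x, U t y⟫_ℂ = ⟪x, y⟫_ℂ :=
  LinearIsometry.inner_map_map ⟨(U t).toLinearMap, hU.norm_map t⟩ x y

end IsUnitaryGroupGeneratedBy

section Intertwining

variable {H K : Type*} [NormedAddCommGroup H] [InnerProductSpace ℂ H]
  [NormedAddCommGroup K] [InnerProductSpace ℂ K]
  {D : Submodule ℂ H} {A : D →ₗ[ℂ] H} {U : ℝ → H →L[ℂ] H}
  {D' : Submodule ℂ K} {B : D' →ₗ[ℂ] K} {W : ℝ → K →L[ℂ] K}
  {V C : K →L[ℂ] H}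

theorem hasDerivAt_inner_apply_comp_apply
    (hA : ∀ x y : D, ⟪A x, (y : H)⟫_ℂ = ⟪(x : H), A y⟫_ℂ)
    (hU : IsUnitaryGroupGeneratedBy A U) (hW : IsUnitaryGroupGeneratedBy B W)
    (hVD : ∀ x ∈ D', V x ∈ D) (hC : ∀ x : D', C x = A ⟨V x, hVD x x.2⟩ - V (B x))
    (y : D) (x : D') (s : ℝ) :
    HasDerivAt (fun s => ⟪U s y, V (W s x)⟫_ℂ) (Complex.I * ⟪U s y, C (W s x)⟫_ℂ) s := by
  have hz : W s x ∈ D' := hW.mapsTo s x x.2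
  have hVz : V (W s x) ∈ D := hVD _ hz
  have hVW : HasDerivAt (fun s => V (W s x)) (-(Complex.I • V (B ⟨W s x, hz⟩))) s := by
    simpa [Function.comp_def] using
      (V.restrictScalars ℝ).hasFDerivAt.comp_hasDerivAt s (hW.hasDerivAt_generator x s)
  have hsym : ⟪A ⟨U s y, hU.mapsTo s y y.2⟩, V (W s x)⟫_ℂ = ⟪U s y, A ⟨V (W s x), hVz⟩⟫_ℂ :=
    hA _ ⟨_, hVz⟩
  have hCz : C (W s x) = A ⟨V (W s x), hVz⟩ - V (B ⟨W s x, hz⟩) := hC ⟨_, hz⟩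
  refine ((hU.hasDerivAt_generator y s).inner ℂ hVW).congr_deriv ?_
  rw [inner_neg_left, inner_smul_left, hsym, inner_neg_right, inner_smul_right, hCz,
    inner_sub_right, Complex.conj_I]
  ring

theorem norm_inner_apply_comp_apply_sub_le
    (hA : ∀ x y : D, ⟪A x, (y : H)⟫_ℂ = ⟪(x : H), A y⟫_ℂ)
    (hU : IsUnitaryGroupGeneratedBy A U) (hW : IsUnitaryGroupGeneratedBy B W)
    (hVD : ∀ x ∈ D', V x ∈ D) (hC : ∀ x : D', C x = A ⟨V x, hVD x x.2⟩ - V (B x))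
    (y : D) (x : D') (t : ℝ) :
    ‖⟪U t y, V (W t x)⟫_ℂ - ⟪(y : H), V x⟫_ℂ‖ ≤ ‖C‖ * (‖(y : H)‖ * ‖(x : K)‖) * |t| := by
  have hbound (s : ℝ) : ‖Complex.I * ⟪U s y, C (W s x)⟫_ℂ‖ ≤ ‖C‖ * (‖(y : H)‖ * ‖(x : K)‖) :=
    calc ‖Complex.I * ⟪U s y, C (W s x)⟫_ℂ‖ = ‖⟪U s y, C (W s x)⟫_ℂ‖ := by
          rw [norm_mul, Complex.norm_I, one_mul]
      _ ≤ ‖U s y‖ * ‖C (W s x)‖ := norm_inner_le_norm _ _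
      _ ≤ ‖(y : H)‖ * (‖C‖ * ‖(x : K)‖) := by
          rw [hU.norm_map, ← hW.norm_map s]
          gcongr
          exact C.le_opNorm _
      _ = ‖C‖ * (‖(y : H)‖ * ‖(x : K)‖) := by ring
  have hmvt := convex_univ.norm_image_sub_le_of_norm_hasDerivWithin_le
    (fun s _ => (hasDerivAt_inner_apply_comp_apply hA hU hW hVD hC y x s).hasDerivWithinAt)
    (fun s _ => hbound s) (Set.mem_univ 0) (Set.mem_univ t)
  simpa only [hU.map_zero, hW.map_zero, one_apply_eq_self, sub_zero, Real.norm_eq_abs] using hmvt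

theorem norm_inner_comp_sub_comp_apply_le
    (hA : ∀ x y : D, ⟪A x, (y : H)⟫_ℂ = ⟪(x : H), A y⟫_ℂ)
    (hU : IsUnitaryGroupGeneratedBy A U) (hW : IsUnitaryGroupGeneratedBy B W)
    (hVD : ∀ x ∈ D', V x ∈ D) (hC : ∀ x : D', C x = A ⟨V x, hVD x x.2⟩ - V (B x))
    (t : ℝ) {y : H} (hy : y ∈ D) {x : K} (hx : x ∈ D') :
    ‖⟪y, (U t ∘L V - V ∘L W t) x⟫_ℂ‖ ≤ ‖C‖ * |t| * (‖y‖ * ‖x‖) := by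
  have h := norm_inner_apply_comp_apply_sub_le hA hU hW hVD hC
    ⟨U (-t) y, hU.mapsTo _ y hy⟩ ⟨x, hx⟩ t
  rw [← hU.inner_map_map t _ (V x), hU.apply_apply_neg, hU.norm_map, norm_sub_rev,
    ← inner_sub_right] at h
  calc ‖⟪y, (U t ∘L V - V ∘L W t) x⟫_ℂ‖ ≤ ‖C‖ * (‖y‖ * ‖x‖) * |t| := h
    _ = ‖C‖ * |t| * (‖y‖ * ‖x‖) := by ring

theorem norm_comp_sub_comp_le (hD : Dense (D : Set H)) (hD' : Dense (D' : Set K))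
    (hA : ∀ x y : D, ⟪A x, (y : H)⟫_ℂ = ⟪(x : H), A y⟫_ℂ)
    (hU : IsUnitaryGroupGeneratedBy A U) (hW : IsUnitaryGroupGeneratedBy B W)
    (hVD : ∀ x ∈ D', V x ∈ D) (hC : ∀ x : D', C x = A ⟨V x, hVD x x.2⟩ - V (B x)) (t : ℝ) :
    ‖U t ∘L V - V ∘L W t‖ ≤ ‖C‖ * |t| :=
  (U t ∘L V - V ∘L W t).opNorm_le_of_norm_inner_le_of_dense hD hD' (by positivity)
    fun _ hy _ hx => norm_inner_comp_sub_comp_apply_le hA hU hW hVD hC t hy hx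

end Intertwining

theorem space_adiabatic_stmt6_general
    {H K : Type*} [NormedAddCommGroup H] [InnerProductSpace ℂ H] [CompleteSpace H]
    [NormedAddCommGroup K] [InnerProductSpace ℂ K] [CompleteSpace K]
    (DH : Submodule ℂ H) (hdenseH : Dense (DH : Set H))
    (Hop : DH →ₗ[ℂ] H)
    (hsymH : ∀ x y : DH, (inner ℂ (Hop x) (y : H) : ℂ) = inner ℂ (x : H) (Hop y))
    (UH : ℝ → H →L[ℂ] H)
    (hUH0 : UH 0 = 1)
    (hUHgrp : ∀ s t : ℝ, UH (s + t) = UH s ∘L UH t)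
    (hUHiso : ∀ (t : ℝ) (x : H), ‖UH t x‖ = ‖x‖)
    (hUHdom : ∀ (t : ℝ), ∀ x ∈ DH, UH t x ∈ DH)
    (hgenH : ∀ (x : DH) (t : ℝ),
      HasDerivAt (fun s : ℝ => UH s (x : H)) (UH t (-(Complex.I • Hop x))) t)
    (DK : Submodule ℂ K) (hdenseK : Dense (DK : Set K))
    (hop : DK →ₗ[ℂ] K)
    (UK : ℝ → K →L[ℂ] K)
    (hUK0 : UK 0 = 1)
    (hUKgrp : ∀ s t : ℝ, UK (s + t) = UK s ∘L UK t)
    (hUKiso : ∀ (t : ℝ) (x : K), ‖UK t x‖ = ‖x‖)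
    (hUKdom : ∀ (t : ℝ), ∀ x ∈ DK, UK t x ∈ DK)
    (hgenK : ∀ (x : DK) (t : ℝ),
      HasDerivAt (fun s : ℝ => UK s (x : K)) (UK t (-(Complex.I • hop x))) t)
    (u : H →L[ℂ] K) (δ : ℝ)
    (hadjdom : ∀ x ∈ DK, adjoint u x ∈ DH)
    (C : K →L[ℂ] H) (hC : ‖C‖ ≤ δ)
    (hdefect : ∀ x : DK, C x = Hop ⟨adjoint u x, hadjdom x x.2⟩ - adjoint u (hop x)) :
    ∀ t : ℝ, ‖UH t ∘L adjoint u - adjoint u ∘L UK t‖ ≤ δ * |t| := by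
  intro t
  have hUH : IsUnitaryGroupGeneratedBy Hop UH := ⟨hUH0, hUHgrp, hUHiso, hUHdom, hgenH⟩
  have hUK : IsUnitaryGroupGeneratedBy hop UK := ⟨hUK0, hUKgrp, hUKiso, hUKdom, hgenK⟩
  calc ‖UH t ∘L adjoint u - adjoint u ∘L UK t‖ ≤ ‖C‖ * |t| :=
        norm_comp_sub_comp_le hdenseH hdenseK hsymH hUH hUK hadjdom hdefect t
    _ ≤ δ * |t| := by gcongr

/-- Let `HH` be self-adjoint on a Hilbert space `H` (a symmetric operator
`Hop` on a dense domain `DH` generating the unitary group `UH t = e^{-i HH t}`), let `hh` be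
self-adjoint on a Hilbert space `K` (a symmetric operator `hop` on a dense domain `DK`
generating the unitary group `UK t = e^{-i hh t}`), and let `u : H →L K` be a bounded operator
whose adjoint `u*` maps `DK` into `DH`, such that the intertwining defect `HH u* - u* hh`
extends to a bounded operator `C` of norm `≤ δ`.  Then for all `t ∈ ℝ`,
`‖e^{-i HH t} u* - u* e^{-i hh t}‖ ≤ δ |t|`. -/
theorem space_adiabatic_stmt6
    {H K : Type*} [NormedAddCommGroup H] [InnerProductSpace ℂ H] [CompleteSpace H]
    [NormedAddCommGroup K] [InnerProductSpace ℂ K] [CompleteSpace K]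
    (DH : Submodule ℂ H) (hdenseH : Dense (DH : Set H))
    (Hop : DH →ₗ[ℂ] H)
    (hsymH : ∀ x y : DH, (inner ℂ (Hop x) (y : H) : ℂ) = inner ℂ (x : H) (Hop y))
    (UH : ℝ → H →L[ℂ] H)
    (hUH0 : UH 0 = 1)
    (hUHgrp : ∀ s t : ℝ, UH (s + t) = UH s ∘L UH t)
    (hUHiso : ∀ (t : ℝ) (x : H), ‖UH t x‖ = ‖x‖)
    (hUHdom : ∀ (t : ℝ), ∀ x ∈ DH, UH t x ∈ DH)
    (hgenH : ∀ (x : DH) (t : ℝ),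
      HasDerivAt (fun s : ℝ => UH s (x : H)) (UH t (-(Complex.I • Hop x))) t)
    (DK : Submodule ℂ K) (hdenseK : Dense (DK : Set K))
    (hop : DK →ₗ[ℂ] K)
    (hsymK : ∀ x y : DK, (inner ℂ (hop x) (y : K) : ℂ) = inner ℂ (x : K) (hop y))
    (UK : ℝ → K →L[ℂ] K)
    (hUK0 : UK 0 = 1)
    (hUKgrp : ∀ s t : ℝ, UK (s + t) = UK s ∘L UK t)
    (hUKiso : ∀ (t : ℝ) (x : K), ‖UK t x‖ = ‖x‖)
    (hUKdom : ∀ (t : ℝ), ∀ x ∈ DK, UK t x ∈ DK)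
    (hgenK : ∀ (x : DK) (t : ℝ),
      HasDerivAt (fun s : ℝ => UK s (x : K)) (UK t (-(Complex.I • hop x))) t)
    (u : H →L[ℂ] K) (δ : ℝ)
    (hadjdom : ∀ x ∈ DK, adjoint u x ∈ DH)
    (C : K →L[ℂ] H) (hC : ‖C‖ ≤ δ)
    (hdefect : ∀ x : DK, C x = Hop ⟨adjoint u x, hadjdom x x.2⟩ - adjoint u (hop x)) :
    ∀ t : ℝ, ‖UH t ∘L adjoint u - adjoint u ∘L UK t‖ ≤ δ * |t| :=
  space_adiabatic_stmt6_general DH hdenseH Hop hsymH UH hUH0 hUHgrp hUHiso hUHdom hgenH DK hdenseK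
    hop UK hUK0 hUKgrp hUKiso hUKdom hgenK u δ hadjdom C hC hdefect
end

section
/- Let P and Q be orthogonal projections on a Hilbert space with ‖P − Q‖ < 1. Then the Nagy operator W := (1 − (P − Q)²)^{−1/2} (P Q + (1−P)(1−Q)) is unitary and satisfies W Q W* = P. -/
open ContinuousLinearMap Pointwise

variable {H : Type*} [NormedAddCommGroup H] [InnerProductSpace ℂ H] [CompleteSpace H]

lemma commute_cfc' {A : Type*} [CStarAlgebra A] {a b : A} (ha : IsSelfAdjoint a)
    (hab : Commute b a) (f : ℝ → ℝ) : Commute b (cfc f a) := by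
  by_cases hf : ContinuousOn f (spectrum ℝ a)
  · rw [cfc_apply f a ha hf]
    generalize (⟨_, hf.restrict⟩ : C(spectrum ℝ a, ℝ)) = g
    induction g using ContinuousMap.induction_on_of_compact with
    | const r =>
      have : (ContinuousMap.const (spectrum ℝ a) r) = algebraMap ℝ C(spectrum ℝ a, ℝ) r := by
        ext x; simp
      rw [this, AlgHomClass.commutes]
      exact (Algebra.commutes r b).symm
    | id => rw [cfcHom_id ha]; exact hab
    | star_id =>
      have : star ((ContinuousMap.id ℝ).restrict (spectrum ℝ a)) =
          (ContinuousMap.id ℝ).restrict (spectrum ℝ a) := by ext x; simp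
      rw [this, cfcHom_id ha]; exact hab
    | add f g hf hg => rw [map_add]; exact hf.add_right hg
    | mul f g hf hg => rw [map_mul]; exact hf.mul_right hg
    | frequently g hg =>
      have hcl : IsClosed {x : A | Commute b x} :=
        isClosed_eq (continuous_const.mul continuous_id) (continuous_id.mul continuous_const)
      have hcont : Continuous (cfcHom ha (R := ℝ)) := (cfcHom_isClosedEmbedding ha).continuous
      exact (hcl.preimage hcont).closure_subset (mem_closure_iff_frequently.mpr hg)
  · rw [cfc_apply_of_not_continuousOn a hf]; exact Commute.zero_right b


/-- The Sz.-Nagy operator `W := (1 - (P - Q)²)^{-1/2} (P Q + (1-P)(1-Q))`, where the inverse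
square root is defined via the continuous functional calculus. -/
noncomputable def nagy (P Q : H →L[ℂ] H) : H →L[ℂ] H :=
  (cfc (fun x : ℝ => (Real.sqrt x)⁻¹) (1 - (P - Q) ∘L (P - Q))) ∘L
    (P ∘L Q + (1 - P) ∘L (1 - Q))

/-- Let `P` and `Q` be orthogonal projections on a Hilbert space with
`‖P - Q‖ < 1`.  Then the Nagy operator `W := (1 - (P - Q)²)^{-1/2}(P Q + (1-P)(1-Q))` is
unitary and satisfies `W Q W* = P`. -/
theorem space_adiabatic_stmt8
    (P Q : H →L[ℂ] H)
    (hPproj : P ∘L P = P) (hPsa : IsSelfAdjoint P)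
    (hQproj : Q ∘L Q = Q) (hQsa : IsSelfAdjoint Q)
    (hPQ : ‖P - Q‖ < 1) :
    adjoint (nagy P Q) ∘L nagy P Q = 1 ∧
    nagy P Q ∘L adjoint (nagy P Q) = 1 ∧
    nagy P Q ∘L Q ∘L adjoint (nagy P Q) = P := by
  have hP : P * P = P := hPproj
  have hQ : Q * Q = Q := hQproj
  have hP1 : ∀ X : H →L[ℂ] H, P * (P * X) = P * X := fun X => by rw [← mul_assoc, hP]
  have hQ1 : ∀ X : H →L[ℂ] H, Q * (Q * X) = Q * X := fun X => by rw [← mul_assoc, hQ]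
  set D : H →L[ℂ] H := P - Q with hD
  set A : H →L[ℂ] H := 1 - D * D with hA
  set T : H →L[ℂ] H := P * Q + (1 - P) * (1 - Q) with hT
  set f : ℝ → ℝ := fun x => (Real.sqrt x)⁻¹ with hf
  set S : H →L[ℂ] H := cfc f A with hS
  have hDsa : IsSelfAdjoint D := hPsa.sub hQsa
  have hAsa : IsSelfAdjoint A := by
    rw [IsSelfAdjoint, hA, star_sub, star_one, star_mul, hDsa.star_eq]
  -- star of T
  have hTstar : star T = Q * P + (1 - Q) * (1 - P) := by
    rw [hT, star_add, star_mul, star_mul, star_sub, star_sub, star_one,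
      hPsa.star_eq, hQsa.star_eq]
  -- algebraic identities
  have hTT : T * star T = A := by
    rw [hT, hTstar, hA, hD]
    simp only [mul_sub, sub_mul, mul_add, add_mul, mul_one, one_mul, mul_assoc, hP, hQ, hP1, hQ1]
    abel
  have hTT' : star T * T = A := by
    rw [hT, hTstar, hA, hD]
    simp only [mul_sub, sub_mul, mul_add, add_mul, mul_one, one_mul, mul_assoc, hP, hQ, hP1, hQ1]
    abel
  have hTQ : T * Q = P * T := by
    rw [hT]
    simp only [mul_sub, sub_mul, mul_add, add_mul, mul_one, one_mul, mul_assoc, hP, hQ, hP1, hQ1]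
    abel
  have hPA : Commute P A := by
    show P * A = A * P
    rw [hA, hD]
    simp only [mul_sub, sub_mul, mul_add, add_mul, mul_one, one_mul, mul_assoc, hP, hQ, hP1, hQ1]
    abel
  have hTA : Commute T A := by
    show T * A = A * T
    rw [← hTT', ← mul_assoc, hTT, hTT']
  -- spectrum of A is positive
  have hspec : ∀ x ∈ spectrum ℝ A, 0 < x := by
    intro x hx
    have hDD : ‖D * D‖ < 1 := by
      have h1 := norm_mul_le D D
      have h2 : ‖D‖ < 1 := hPQ
      nlinarith [norm_nonneg D]
    have h1x : (1 : ℝ) - x ∈ spectrum ℝ (D * D) := by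
      have key : ({(1:ℝ)} : Set ℝ) - spectrum ℝ (D * D) = spectrum ℝ A := by
        have := spectrum.singleton_sub_eq (R := ℝ) (D * D) 1
        rwa [map_one] at this
      rw [← key] at hx
      obtain ⟨a, ha, b, hb, hab⟩ := Set.mem_sub.mp hx
      rw [Set.mem_singleton_iff] at ha
      subst ha
      have : b = 1 - x := by linarith
      rwa [← this]
    have hb1 : ‖(1 : ℝ) - x‖ ≤ ‖D * D‖ * ‖(1 : H →L[ℂ] H)‖ :=
      spectrum.norm_le_norm_mul_of_mem h1x
    have hn1 : ‖(1 : H →L[ℂ] H)‖ ≤ 1 := norm_id_le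
    have habs : |1 - x| < 1 := by
      rw [Real.norm_eq_abs] at hb1
      have hDDnn : (0:ℝ) ≤ ‖D * D‖ := norm_nonneg _
      nlinarith [norm_nonneg (D * D), norm_nonneg (1 : H →L[ℂ] H)]
    have := abs_lt.mp habs
    linarith [this.1, this.2]
  -- continuity facts
  have hf_cont : ContinuousOn f (spectrum ℝ A) := by
    apply Real.continuous_sqrt.continuousOn.inv₀
    intro x hx
    exact (Real.sqrt_ne_zero'.mpr (hspec x hx))
  have hinv_cont : ContinuousOn (fun x : ℝ => x⁻¹) (spectrum ℝ A) := by
    apply continuousOn_id.inv₀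
    intro x hx
    exact (hspec x hx).ne'
  -- S properties
  have hSsa : IsSelfAdjoint S := cfc_predicate f A
  have hSA : Commute S A := by
    have := cfc_commute_cfc f id A
    rwa [cfc_id ℝ A hAsa] at this
  have hS2 : S * S = cfc (fun x : ℝ => x⁻¹) A := by
    rw [hS, ← cfc_mul f f A hf_cont hf_cont]
    apply cfc_congr
    intro x hx
    rw [hf]
    show (Real.sqrt x)⁻¹ * (Real.sqrt x)⁻¹ = x⁻¹
    rw [← mul_inv, Real.mul_self_sqrt (hspec x hx).le]
  have hSSA : S * S * A = 1 := by
    rw [hS2]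
    nth_rewrite 2 [← cfc_id ℝ A hAsa]
    rw [← cfc_mul _ _ A hinv_cont continuousOn_id]
    have : cfc (fun x : ℝ => x⁻¹ * id x) A = cfc (fun _ : ℝ => (1 : ℝ)) A :=
      cfc_congr fun x hx => inv_mul_cancel₀ (hspec x hx).ne'
    rw [this, cfc_const_one ℝ A]
  have hASS : A * (S * S) = 1 := by
    have hcomm : Commute A (S * S) := (hSA.symm).mul_right hSA.symm
    rw [hcomm.eq]
    exact hSSA
  have hPS : Commute P S := commute_cfc' hAsa hPA f
  have hTS : Commute T S := commute_cfc' hAsa hTA f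
  -- identify nagy with S * T and adjoint with star
  have hW : nagy P Q = S * T := rfl
  have hWadj : adjoint (nagy P Q) = star T * S := by
    rw [← star_eq_adjoint, hW, star_mul, hSsa.star_eq]
  rw [hWadj, hW]
  have hcomp : ∀ X Y : H →L[ℂ] H, X ∘L Y = X * Y := fun _ _ => rfl
  refine ⟨?_, ?_, ?_⟩
  · -- star T * S * (S * T) = 1
    rw [hcomp]
    calc star T * S * (S * T) = star T * (S * S * T) := by noncomm_ring
      _ = star T * (T * (S * S)) := by rw [(hTS.mul_right hTS).eq]
      _ = star T * T * (S * S) := by noncomm_ring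
      _ = 1 := by rw [hTT']; exact hASS
  · rw [hcomp]
    calc S * T * (star T * S) = S * (T * star T) * S := by noncomm_ring
      _ = S * A * S := by rw [hTT]
      _ = A * S * S := by rw [hSA.eq]
      _ = 1 := by rw [mul_assoc]; exact hASS
  · rw [hcomp, hcomp]
    calc S * T * (Q * (star T * S)) = S * (T * Q) * (star T * S) := by noncomm_ring
      _ = S * (P * T) * (star T * S) := by rw [hTQ]
      _ = S * P * (T * star T) * S := by noncomm_ring
      _ = P * S * (A * S) := by rw [hTT, hPS.symm.eq]; noncomm_ring
      _ = P * (S * (A * S)) := by noncomm_ring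
      _ = P * (S * (S * A)) := by rw [hSA.symm.eq]
      _ = P * (S * S * A) := by noncomm_ring
      _ = P := by rw [hSSA, mul_one]
end

section
/- Let P and Q be orthogonal projections on a Hilbert space with ‖P − Q‖ ≤ δ < 1. Then the Nagy unitary W := (1 − (P − Q)²)^{−1/2}(PQ + (1−P)(1−Q)) satisfies ‖W − 1‖ ≤ C δ for a constant C depending only on δ₀ for δ ≤ δ₀ < 1 (e.g. ‖W − 1‖ ≤ (1−δ²)^{−1/2}(2δ + 1 − √(1−δ²)) ). -/
open ContinuousLinearMap

variable {H : Type*} [NormedAddCommGroup H] [InnerProductSpace ℂ H] [CompleteSpace H]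

/-- Let `P` and `Q` be orthogonal projections on a Hilbert space with
`‖P - Q‖ ≤ δ < 1`.  Then the Nagy unitary `W := (1 - (P - Q)²)^{-1/2}(P Q + (1-P)(1-Q))`
satisfies the explicit estimate `‖W - 1‖ ≤ (1 - δ²)^{-1/2}(2δ + 1 - √(1 - δ²))`; in
particular `‖W - 1‖ ≤ C δ` with a constant depending only on an upper bound `δ₀ < 1`. -/
theorem space_adiabatic_stmt9
    (P Q : H →L[ℂ] H) (δ : ℝ) (hδ0 : 0 ≤ δ) (hδ1 : δ < 1)
    (hPproj : P ∘L P = P) (hPsa : IsSelfAdjoint P)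
    (hQproj : Q ∘L Q = Q) (hQsa : IsSelfAdjoint Q)
    (hPQ : ‖P - Q‖ ≤ δ) :
    ‖nagy P Q - 1‖ ≤
      (Real.sqrt (1 - δ ^ 2))⁻¹ * (2 * δ + 1 - Real.sqrt (1 - δ ^ 2)) := by
  set D := P - Q with hD
  set T := 1 - D ∘L D with hT
  set f : ℝ → ℝ := fun x => (Real.sqrt x)⁻¹ with hf
  have hd2 : (0:ℝ) < 1 - δ ^ 2 := by nlinarith
  set s := Real.sqrt (1 - δ ^ 2) with hs_def
  have hs0 : 0 < s := Real.sqrt_pos.mpr hd2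
  have hs1 : s ≤ 1 := by
    rw [show (1:ℝ) = Real.sqrt 1 by simp]
    exact Real.sqrt_le_sqrt (by nlinarith)
  have hP2 : P * P = P := hPproj
  have hDsa : IsSelfAdjoint D := hPsa.sub hQsa
  have hDD : D ∘L D = star D * D := by rw [hDsa.star_eq]; rfl
  have hTsa : IsSelfAdjoint T := by
    rw [hT, hDD]
    exact (IsSelfAdjoint.one (H →L[ℂ] H)).sub (IsSelfAdjoint.star_mul_self D)
  have hone : ‖(1 : H →L[ℂ] H)‖ ≤ 1 := by rw [one_def]; exact norm_id_le
  -- spectrum of T lies in [1 - δ², 1]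
  have hspec : ∀ x ∈ spectrum ℝ T, 1 - δ ^ 2 ≤ x ∧ x ≤ 1 := by
    intro x hx
    have h1 : T = (algebraMap ℝ (H →L[ℂ] H)) 1 - D ∘L D := by
      rw [hT, map_one]
    rw [h1, ← spectrum.singleton_sub_eq] at hx
    obtain ⟨y, hy, z, hz, hxyz⟩ := Set.mem_sub.mp hx
    rw [Set.mem_singleton_iff] at hy
    subst hy
    have hz0 : 0 ≤ z := by
      rw [hDD] at hz
      exact spectrum_star_mul_self_nonneg z hz
    have hzδ : z ≤ δ ^ 2 := by
      have h2 : ‖z‖ ≤ ‖D ∘L D‖ * ‖(1 : H →L[ℂ] H)‖ := spectrum.norm_le_norm_mul_of_mem hz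
      have h3 : ‖D ∘L D‖ ≤ ‖D‖ * ‖D‖ := opNorm_comp_le D D
      have h4 : ‖D‖ ≤ δ := hPQ
      have h5 : (0:ℝ) ≤ ‖D ∘L D‖ := norm_nonneg _
      have h6 : z ≤ |z| := le_abs_self z
      rw [Real.norm_eq_abs] at h2
      have h7 : ‖D ∘L D‖ * ‖(1 : H →L[ℂ] H)‖ ≤ (‖D‖ * ‖D‖) * 1 :=
        mul_le_mul h3 hone (norm_nonneg _) (by positivity)
      have h8 : ‖D‖ * ‖D‖ ≤ δ * δ := mul_le_mul h4 h4 (norm_nonneg _) hδ0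
      nlinarith [abs_nonneg z]
    constructor
    · nlinarith
    · nlinarith
  have hcont : ContinuousOn f (spectrum ℝ T) := by
    have : ContinuousOn f {x : ℝ | 0 < x} := by
      apply ContinuousOn.inv₀ (Real.continuous_sqrt.continuousOn)
      exact fun x hx => (Real.sqrt_pos.mpr hx).ne'
    exact this.mono fun x hx => lt_of_lt_of_le hd2 (hspec x hx).1
  -- pointwise bounds on f over the spectrum
  have hfb : ∀ x ∈ spectrum ℝ T, s ≤ Real.sqrt x ∧ Real.sqrt x ≤ 1 := by
    intro x hx
    obtain ⟨h1, h2⟩ := hspec x hx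
    constructor
    · exact Real.sqrt_le_sqrt h1
    · rw [show (1:ℝ) = Real.sqrt 1 by simp]
      exact Real.sqrt_le_sqrt h2
  have hnormR : ‖cfc f T‖ ≤ s⁻¹ := by
    apply norm_cfc_le (by positivity)
    intro x hx
    obtain ⟨h1, h2⟩ := hfb x hx
    rw [Real.norm_eq_abs, abs_of_nonneg (by positivity)]
    exact inv_anti₀ hs0 h1
  have hsinv1 : 1 ≤ s⁻¹ := by
    rw [le_inv_comm₀ one_pos hs0]
    simpa using hs1
  have hnormR1 : ‖cfc f T - 1‖ ≤ s⁻¹ - 1 := by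
    have hsub : cfc f T - 1 = cfc (fun x => f x - 1) T := by
      rw [cfc_sub f (fun _ => 1) T hcont (by fun_prop), cfc_const_one ℝ T]
    rw [hsub]
    apply norm_cfc_le (by linarith)
    intro x hx
    obtain ⟨h1, h2⟩ := hfb x hx
    have hx0 : 0 < Real.sqrt x := lt_of_lt_of_le hs0 h1
    have h3 : 1 ≤ (Real.sqrt x)⁻¹ := by
      rw [le_inv_comm₀ one_pos hx0]; simpa using h2
    have h4 : (Real.sqrt x)⁻¹ ≤ s⁻¹ := inv_anti₀ hs0 h1
    rw [Real.norm_eq_abs, abs_of_nonneg (by linarith)]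
    simp only [hf]
    linarith
  -- the reflection U := 2P - 1 has norm ≤ 1
  have hU2 : (P + P - 1) * (P + P - 1) = 1 := by
    simp only [mul_sub, sub_mul, add_mul, mul_add, mul_one, one_mul, hP2]
    abel
  have hUnorm : ‖P + P - 1‖ ≤ 1 := by
    have hUsa : IsSelfAdjoint (P + P - 1) := (hPsa.add hPsa).sub (IsSelfAdjoint.one (H →L[ℂ] H))
    have h1 : ‖star (P + P - 1) * (P + P - 1)‖ = ‖P + P - 1‖ * ‖P + P - 1‖ :=
      CStarRing.norm_star_mul_self
    rw [hUsa.star_eq, hU2] at h1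
    nlinarith [norm_nonneg (P + P - 1)]
  -- algebraic identity
  have expand : P ∘L Q + (1 - P) ∘L (1 - Q) = 1 + (P + P - 1) * (Q - P) := by
    show P * Q + (1 - P) * (1 - Q) = 1 + (P + P - 1) * (Q - P)
    simp only [mul_sub, sub_mul, add_mul, mul_add, mul_one, one_mul, hP2]
    abel
  have hkey : nagy P Q - 1 = (cfc f T - 1) + cfc f T * ((P + P - 1) * (Q - P)) := by
    unfold nagy
    rw [expand]
    show cfc f T * (1 + (P + P - 1) * (Q - P)) - 1 = _
    rw [mul_add, mul_one]
    abel
  have hQP : ‖Q - P‖ ≤ δ := by rw [norm_sub_rev]; exact hPQ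
  have hbound : ‖nagy P Q - 1‖ ≤ (s⁻¹ - 1) + s⁻¹ * (1 * δ) := by
    rw [hkey]
    refine (norm_add_le _ _).trans (add_le_add hnormR1 ?_)
    refine (norm_mul_le _ _).trans ?_
    have h2 : ‖(P + P - 1) * (Q - P)‖ ≤ 1 * δ :=
      (norm_mul_le _ _).trans (mul_le_mul hUnorm hQP (norm_nonneg _) zero_le_one)
    exact mul_le_mul hnormR h2 (norm_nonneg _) (by positivity)
  have hss : s * s⁻¹ = 1 := mul_inv_cancel₀ hs0.ne'
  have hsinv0 : (0:ℝ) ≤ s⁻¹ := by positivity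
  calc ‖nagy P Q - 1‖ ≤ (s⁻¹ - 1) + s⁻¹ * (1 * δ) := hbound
    _ ≤ s⁻¹ * (2 * δ + 1 - s) := by nlinarith
end

section
/- Let A, B be self-adjoint operators on a Hilbert space with common core D, generating unitary groups, such that A − B extends to a bounded operator and there is a projection Q with ‖(A − B) Q‖ ≤ δ. Then ‖(e^{−iAt} − e^{−iBt}) Q'‖ ≤ δ |t| for any projection Q' commuting with e^{−iBs} for all s and satisfying Q' = Q Q' (more simply: if (A−B)Q is bounded by δ and Q commutes with B, then ‖(e^{−iAt} − e^{−iBt})Q‖ ≤ δ|t|). -/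
/-! For `x` in the core put `G s = e^{iAs} e^{-iBs} Q x`. Its derivative is
`i e^{iAs} (A - B) e^{-iBs} Q x = i e^{iAs} (A - B) Q e^{-iBs} x`, of norm at most `δ ‖x‖` because
the groups are isometric and `Q` commutes with `e^{-iBs}`. The mean value inequality then gives
`‖(e^{-iAt} - e^{-iBt}) Q x‖ = ‖G t - G 0‖ ≤ δ |t| ‖x‖`, and density of the core extends the bound
to all `x`. Differentiating `G` only needs strong continuity of `e^{iAs}`, which follows on all
of the space from its differentiability on the dense core. -/

open ContinuousLinearMap Filter Topology

section

variable {𝕜 E F : Type*} [NontriviallyNormedField 𝕜]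
  [NormedAddCommGroup E] [NormedSpace 𝕜 E] [NormedAddCommGroup F] [NormedSpace 𝕜 F]

theorem ContinuousLinearMap.opNorm_le_of_dense {D : Set E} (hD : Dense D) (T : E →L[𝕜] F)
    {M : ℝ} (hM : 0 ≤ M) (hT : ∀ x ∈ D, ‖T x‖ ≤ M * ‖x‖) : ‖T‖ ≤ M :=
  opNorm_le_bound T hM fun x =>
    hD.induction hT (isClosed_le (by fun_prop) (by fun_prop)) x

theorem continuous_apply_of_dense {ι : Type*} [TopologicalSpace ι] {U : ι → E →L[𝕜] F}
    {C : ℝ} (hU : ∀ s, ‖U s‖ ≤ C) {D : Set E} (hD : Dense D)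
    (hUD : ∀ x ∈ D, Continuous fun s => U s x) (x : E) : Continuous fun s => U s x := by
  have hequi : Equicontinuous fun s => ⇑(U s) :=
    (LipschitzWith.uniformEquicontinuous _ C.toNNReal fun s => (U s).lipschitz.weaken (by
      rw [← NNReal.coe_le_coe, coe_nnnorm]; exact (hU s).trans C.le_coe_toNNReal)).equicontinuous
  refine continuous_iff_continuousAt.2 fun s₀ => ?_
  exact hD.induction (fun y hy => (hUD y hy).continuousAt)
    (hequi.isClosed_setOfPred_tendsto (U s₀).continuous) x

variable [NormedSpace ℝ E]

theorem hasDerivAt_orbit_of_hasDerivAt_zero {U : ℝ → E →L[𝕜] E}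
    (hgrp : ∀ s t, U (s + t) = U s ∘L U t) {y v : E} {s₀ : ℝ}
    (h : HasDerivAt (fun σ => U σ (U s₀ y)) v 0) : HasDerivAt (fun s => U s y) v s₀ := by
  have hshift := HasDerivAt.comp_sub_const s₀ s₀ (by rwa [sub_self])
  refine hshift.congr_of_eventuallyEq (Eventually.of_forall fun s => ?_)
  simp [← comp_apply, ← hgrp]

variable [NormedAlgebra ℝ 𝕜] [IsScalarTower ℝ 𝕜 E] [NormedSpace ℝ F] [IsScalarTower ℝ 𝕜 F]

theorem HasDerivAt.clm_apply_of_continuousAt {V : ℝ → E →L[𝕜] F} {C : ℝ}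
    (hVb : ∀ s, ‖V s‖ ≤ C) {f : ℝ → E} {f' : E} {v : F} {s₀ : ℝ}
    (hVc : ContinuousAt (fun s => V s f') s₀)
    (hf : HasDerivAt f f' s₀) (hV : HasDerivAt (fun s => V s (f s₀)) v s₀) :
    HasDerivAt (fun s => V s (f s)) (V s₀ f' + v) s₀ := by
  rw [hasDerivAt_iff_isLittleO] at hf hV ⊢
  have hmoving : (fun s => V s (f s - f s₀ - (s - s₀) • f')) =o[𝓝 s₀] fun s => s - s₀ :=
    (Asymptotics.IsBigO.of_bound C (Eventually.of_forall fun s =>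
      ((V s).le_opNorm _).trans (by gcongr; exact hVb s))).trans_isLittleO hf
  have hstrong : (fun s => (s - s₀) • (V s f' - V s₀ f')) =o[𝓝 s₀] fun s => s - s₀ := by
    have h := (Asymptotics.isBigO_refl (fun s : ℝ => s - s₀) (𝓝 s₀)).smul_isLittleO
      ((Asymptotics.isLittleO_one_iff ℝ).2 (by simpa using hVc.tendsto.sub_const (V s₀ f')))
    simpa using h
  refine ((hmoving.add hstrong).add hV).congr_left fun s => ?_
  simp only [map_sub, map_smul_of_tower, smul_sub, smul_add]
  abel

theorem norm_apply_sub_apply_le_mul_abs {D : Set E} (hD : Dense D) {UA UB : ℝ → E →L[𝕜] E}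
    {LA LB : D → E}
    (hUA0 : UA 0 = 1) (hUAgrp : ∀ s t, UA (s + t) = UA s ∘L UA t)
    (hUAiso : ∀ t x, ‖UA t x‖ = ‖x‖)
    (hgenA : ∀ (x : D) (t : ℝ), HasDerivAt (fun s => UA s x) (UA t (LA x)) t)
    (hUB0 : UB 0 = 1) (hUBgrp : ∀ s t, UB (s + t) = UB s ∘L UB t)
    (hgenB : ∀ (x : D) (t : ℝ), HasDerivAt (fun s => UB s x) (UB t (LB x)) t)
    {y : E} (hy : ∀ s, UB s y ∈ D) {M : ℝ}
    (hM : ∀ s, ‖LA ⟨UB s y, hy s⟩ - LB ⟨UB s y, hy s⟩‖ ≤ M) (t : ℝ) :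
    ‖UA t y - UB t y‖ ≤ M * |t| := by
  have hUA_le : ∀ s, ‖UA s‖ ≤ 1 := fun s =>
    opNorm_le_bound _ zero_le_one fun x => by rw [hUAiso, one_mul]
  have hUAcont : ∀ x, Continuous fun s => UA s x :=
    continuous_apply_of_dense hUA_le hD fun x hx =>
      continuous_iff_continuousAt.2 fun s => (hgenA ⟨x, hx⟩ s).continuousAt
  set G : ℝ → E := fun s => UA (-s) (UB s y)
  have hG : ∀ s₀, HasDerivAt G (UA (-s₀) (LB ⟨UB s₀ y, hy s₀⟩ - LA ⟨UB s₀ y, hy s₀⟩)) s₀ := by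
    intro s₀
    set w : D := ⟨UB s₀ y, hy s₀⟩
    have hB : HasDerivAt (fun s => UB s y) (LB w) s₀ :=
      hasDerivAt_orbit_of_hasDerivAt_zero hUBgrp (by simpa [hUB0] using hgenB w 0)
    have hA : HasDerivAt (fun s => UA (-s) w) (-UA (-s₀) (LA w)) s₀ := by
      simpa using HasDerivAt.comp_const_sub 0 s₀ (by simpa using hgenA w (-s₀))
    simpa [map_sub, sub_eq_add_neg] using
      hB.clm_apply_of_continuousAt (V := fun s => UA (-s)) (fun s => hUA_le (-s))
        ((hUAcont _).comp continuous_neg).continuousAt hA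
  have hmvt : ‖G t - G 0‖ ≤ M * ‖t - 0‖ :=
    convex_univ.norm_image_sub_le_of_norm_hasDerivWithin_le
      (fun s _ => (hG s).hasDerivWithinAt)
      (fun s _ => by rw [hUAiso, norm_sub_rev]; exact hM s) (Set.mem_univ 0) (Set.mem_univ t)
  have hG0 : G 0 = y := by simp [G, hUA0, hUB0]
  have hUAt_G : UA t (G t) = UB t y := by
    have hinv : UA t ∘L UA (-t) = 1 := by rw [← hUAgrp, add_neg_cancel, hUA0]
    rw [show UA t (G t) = (UA t ∘L UA (-t)) (UB t y) from rfl, hinv, one_apply_eq_self]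
  calc ‖UA t y - UB t y‖ = ‖UA t (G 0 - G t)‖ := by rw [map_sub, hUAt_G, hG0]
    _ = ‖G t - G 0‖ := by rw [hUAiso, norm_sub_rev]
    _ ≤ M * |t| := by simpa using hmvt

end

theorem space_adiabatic_stmt11_general
    {H : Type*} [NormedAddCommGroup H] [InnerProductSpace ℂ H] [CompleteSpace H]
    (D : Submodule ℂ H) (hdense : Dense (D : Set H))
    (Aop Bop : D →ₗ[ℂ] H)
    (UA UB : ℝ → H →L[ℂ] H)
    (hUA0 : UA 0 = 1) (hUB0 : UB 0 = 1)
    (hUAgrp : ∀ s t : ℝ, UA (s + t) = UA s ∘L UA t)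
    (hUBgrp : ∀ s t : ℝ, UB (s + t) = UB s ∘L UB t)
    (hUAiso : ∀ (t : ℝ) (x : H), ‖UA t x‖ = ‖x‖)
    (hUBiso : ∀ (t : ℝ) (x : H), ‖UB t x‖ = ‖x‖)
    (hUBdom : ∀ (t : ℝ), ∀ x ∈ D, UB t x ∈ D)
    (hgenA : ∀ (x : D) (t : ℝ),
      HasDerivAt (fun s : ℝ => UA s (x : H)) (UA t (-(Complex.I • Aop x))) t)
    (hgenB : ∀ (x : D) (t : ℝ),
      HasDerivAt (fun s : ℝ => UB s (x : H)) (UB t (-(Complex.I • Bop x))) t)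
    (Δ : H →L[ℂ] H)
    (hΔ : ∀ x : D, Δ x = Aop x - Bop x)
    (Q : H →L[ℂ] H)
    (hQdom : ∀ x ∈ D, Q x ∈ D)
    (hQcomm : ∀ s : ℝ, Q ∘L UB s = UB s ∘L Q)
    (δ : ℝ) (hδ : ‖Δ ∘L Q‖ ≤ δ) :
    ∀ t : ℝ, ‖(UA t - UB t) ∘L Q‖ ≤ δ * |t| := by
  intro t
  refine opNorm_le_of_dense hdense _ (mul_nonneg ((norm_nonneg _).trans hδ) (abs_nonneg t))
    fun x hx => ?_
  have hy : ∀ s, UB s (Q x) ∈ D := fun s => hUBdom s _ (hQdom x hx)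
  have hbound : ∀ s, ‖-(Complex.I • Aop ⟨UB s (Q x), hy s⟩) - -(Complex.I • Bop ⟨UB s (Q x), hy s⟩)‖
      ≤ δ * ‖x‖ := by
    intro s
    calc _ = ‖(Δ ∘L Q) (UB s x)‖ := by
          rw [neg_sub_neg, ← smul_sub, norm_smul, Complex.norm_I, one_mul, norm_sub_rev, ← hΔ]
          change ‖Δ (UB s (Q x))‖ = _
          rw [← comp_apply (UB s), ← hQcomm, comp_apply, comp_apply]
      _ ≤ δ * ‖x‖ := by
          rw [← hUBiso s x]; exact (le_opNorm _ _).trans (by gcongr)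
  simpa [mul_right_comm] using
    norm_apply_sub_apply_le_mul_abs (LA := fun x => -(Complex.I • Aop x))
      (LB := fun x => -(Complex.I • Bop x)) hdense hUA0 hUAgrp hUAiso hgenA hUB0 hUBgrp hgenB hy
      hbound t

/-- Let `A`, `B` be self-adjoint operators (symmetric operators `Aop`,
`Bop` on a common dense core `D`, generating the unitary groups `UA t = e^{-iAt}` and
`UB t = e^{-iBt}`), such that `A - B` extends to a bounded operator `Δ`.  Let `Q` be an
orthogonal projection commuting with the group `e^{-iBs}` for all `s`, with
`‖Δ ∘ Q‖ ≤ δ`.  Then `‖(e^{-iAt} - e^{-iBt}) Q‖ ≤ δ |t|` for all `t`. -/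
theorem space_adiabatic_stmt11
    {H : Type*} [NormedAddCommGroup H] [InnerProductSpace ℂ H] [CompleteSpace H]
    (D : Submodule ℂ H) (hdense : Dense (D : Set H))
    (Aop Bop : D →ₗ[ℂ] H)
    (hsymA : ∀ x y : D, (inner ℂ (Aop x) (y : H) : ℂ) = inner ℂ (x : H) (Aop y))
    (hsymB : ∀ x y : D, (inner ℂ (Bop x) (y : H) : ℂ) = inner ℂ (x : H) (Bop y))
    (UA UB : ℝ → H →L[ℂ] H)
    (hUA0 : UA 0 = 1) (hUB0 : UB 0 = 1)
    (hUAgrp : ∀ s t : ℝ, UA (s + t) = UA s ∘L UA t)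
    (hUBgrp : ∀ s t : ℝ, UB (s + t) = UB s ∘L UB t)
    (hUAiso : ∀ (t : ℝ) (x : H), ‖UA t x‖ = ‖x‖)
    (hUBiso : ∀ (t : ℝ) (x : H), ‖UB t x‖ = ‖x‖)
    (hUAdom : ∀ (t : ℝ), ∀ x ∈ D, UA t x ∈ D)
    (hUBdom : ∀ (t : ℝ), ∀ x ∈ D, UB t x ∈ D)
    (hgenA : ∀ (x : D) (t : ℝ),
      HasDerivAt (fun s : ℝ => UA s (x : H)) (UA t (-(Complex.I • Aop x))) t)
    (hgenB : ∀ (x : D) (t : ℝ),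
      HasDerivAt (fun s : ℝ => UB s (x : H)) (UB t (-(Complex.I • Bop x))) t)
    (Δ : H →L[ℂ] H)
    (hΔ : ∀ x : D, Δ x = Aop x - Bop x)
    (Q : H →L[ℂ] H) (hQproj : Q ∘L Q = Q) (hQsa : IsSelfAdjoint Q)
    (hQdom : ∀ x ∈ D, Q x ∈ D)
    (hQcomm : ∀ s : ℝ, Q ∘L UB s = UB s ∘L Q)
    (δ : ℝ) (hδ : ‖Δ ∘L Q‖ ≤ δ) :
    ∀ t : ℝ, ‖(UA t - UB t) ∘L Q‖ ≤ δ * |t| :=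
  space_adiabatic_stmt11_general D hdense Aop Bop UA UB hUA0 hUB0 hUAgrp hUBgrp hUAiso hUBiso hUBdom
    hgenA hgenB Δ hΔ Q hQdom hQcomm δ hδ
end

section
/- Let T be a symmetric operator on a Hilbert space with dense domain D. Suppose for some s > 0 there exist bounded operators B₊, B₋ with B₊ D ⊆ D, B₋ D ⊆ D and bounded operators S₊, S₋ with ‖S₊‖ < 1, ‖S₋‖ < 1 such that (T + is)B₊ = 1 + S₊ and (T − is)B₋ = 1 + S₋ on D. Then T is essentially self-adjoint on D. -/
/-! Since `‖S‖ < 1`, the Neumann series makes `1 + S` a homeomorphism of the Banach space, so it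
maps the dense domain `D` onto a dense set; by hypothesis `(1 + S₊) D = (T + is) B₊ D` lies in
the range of `T + is` on `D`, and likewise for `T - is`. -/

theorem Dense.image_add_apply {𝕜 E : Type*} [NontriviallyNormedField 𝕜] [NormedAddCommGroup E]
    [NormedSpace 𝕜 E] [CompleteSpace E] {D : Set E} (hD : Dense D) {S : E →L[𝕜] E}
    (hS : ‖S‖ < 1) : Dense ((fun x => x + S x) '' D) := by
  let u := Units.oneSub (-S) (by rwa [norm_neg])
  let e := ContinuousLinearEquiv.ofUnit u
  have he : (fun x => x + S x) = e := by
    ext x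
    change _ = (u : E →L[𝕜] E) x
    simp [u, Units.oneSub, sub_eq_add_neg]
  rw [he]
  exact e.surjective.denseRange.dense_image e.continuous hD

theorem space_adiabatic_stmt12_general
    {H : Type*} [NormedAddCommGroup H] [InnerProductSpace ℂ H] [CompleteSpace H]
    (D : Submodule ℂ H) (hdense : Dense (D : Set H))
    (T : D →ₗ[ℂ] H)
    (s : ℝ)
    (Bp Bm Sp Sm : H →L[ℂ] H)
    (hBpD : ∀ x ∈ D, Bp x ∈ D) (hBmD : ∀ x ∈ D, Bm x ∈ D)
    (hSp : ‖Sp‖ < 1) (hSm : ‖Sm‖ < 1)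
    (heqp : ∀ x : D, T ⟨Bp x, hBpD x x.2⟩ + (Complex.I * s) • (Bp (x : H)) = (x : H) + Sp x)
    (heqm : ∀ x : D, T ⟨Bm x, hBmD x x.2⟩ - (Complex.I * s) • (Bm (x : H)) = (x : H) + Sm x) :
    Dense {y : H | ∃ x : D, y = T x + (Complex.I * s) • (x : H)} ∧
    Dense {y : H | ∃ x : D, y = T x - (Complex.I * s) • (x : H)} := by
  constructor
  · refine (hdense.image_add_apply hSp).mono ?_
    rintro _ ⟨x, hx, rfl⟩
    exact ⟨⟨Bp x, hBpD x hx⟩, (heqp ⟨x, hx⟩).symm⟩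
  · refine (hdense.image_add_apply hSm).mono ?_
    rintro _ ⟨x, hx, rfl⟩
    exact ⟨⟨Bm x, hBmD x hx⟩, (heqm ⟨x, hx⟩).symm⟩

/-- Let `T` be a symmetric operator on a Hilbert space with dense domain
`D`.  Suppose for some `s > 0` there exist bounded operators `B₊`, `B₋` mapping `D` into `D`
and bounded operators `S₊`, `S₋` with `‖S₊‖ < 1`, `‖S₋‖ < 1` such that
`(T + is) B₊ = 1 + S₊` and `(T - is) B₋ = 1 + S₋` on `D`.  Then `T` is essentially
self-adjoint on `D`, formalized by the standard criterion that the ranges of `T ± is`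
(on `D`) are dense, equivalently `Ker(T* ∓ is) = {0}`. -/
theorem space_adiabatic_stmt12
    {H : Type*} [NormedAddCommGroup H] [InnerProductSpace ℂ H] [CompleteSpace H]
    (D : Submodule ℂ H) (hdense : Dense (D : Set H))
    (T : D →ₗ[ℂ] H)
    (hsym : ∀ x y : D, (inner ℂ (T x) (y : H) : ℂ) = inner ℂ (x : H) (T y))
    (s : ℝ) (hs : 0 < s)
    (Bp Bm Sp Sm : H →L[ℂ] H)
    (hBpD : ∀ x ∈ D, Bp x ∈ D) (hBmD : ∀ x ∈ D, Bm x ∈ D)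
    (hSp : ‖Sp‖ < 1) (hSm : ‖Sm‖ < 1)
    (heqp : ∀ x : D, T ⟨Bp x, hBpD x x.2⟩ + (Complex.I * s) • (Bp (x : H)) = (x : H) + Sp x)
    (heqm : ∀ x : D, T ⟨Bm x, hBmD x x.2⟩ - (Complex.I * s) • (Bm (x : H)) = (x : H) + Sm x) :
    Dense {y : H | ∃ x : D, y = T x + (Complex.I * s) • (x : H)} ∧
    Dense {y : H | ∃ x : D, y = T x - (Complex.I * s) • (x : H)} :=
  space_adiabatic_stmt12_general D hdense T s Bp Bm Sp Sm hBpD hBmD hSp hSm heqp heqm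
end
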